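/- arXiv:0910.5879 — 3 statements merged into one kernel-verified Lean document; each statement's English description precedes it below -/
import Mathlib

section
/- Chacon's biting lemma: Let Ω ⊂ ℝ^m be a measurable set of finite Lebesgue measure and let (g_k) be a sequence in L^1(Ω) with sup_k ∫_Ω |g_k| < +∞. Then there exist a subsequence (g_{k_j}) and a sequence (t_j) ⊂ [0,+∞) with t_j → +∞ such that the truncated sequence (max(−t_j, min(g_{k_j}, t_j)))_j is equi-integrable on Ω. -/
/-!
Truncate at level `t_j = j`. The tail integrals `β_k(n) = ∫_Ω (|g_k| - n)⁺` lie in `[0, C]` and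
decrease in `n`, so along a subsequence they converge for every `n` to a decreasing limit `b` with
`b(n) → L`; a diagonal extraction also makes `β_{k_j}(j) → L`. For `n ≤ j` and `E ⊆ Ω`,
`∫_E min(|g|, j) ≤ n |E| + β(n) - β(j)`, and the gap `β_{k_j}(n) - β_{k_j}(j)` tends to
`b(n) - L`, which is small once `n` is large. The finitely many remaining indices are handled by
`∫_E min(|g|, j) ≤ j |E|`.
-/

open MeasureTheory Filter Topology

lemma abs_max_neg_min (a : ℝ) {t : ℝ} (ht : 0 ≤ t) : |max (-t) (min a t)| = min |a| t := by
  simp only [abs_eq_max_neg, max_def, min_def]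
  split_ifs <;> linarith

lemma min_le_add_sub_of_le {a s t : ℝ} (hst : s ≤ t) :
    min a t ≤ s + (max (a - s) 0 - max (a - t) 0) := by
  simp only [max_def, min_def]
  split_ifs <;> linarith

section Tail

variable {α : Type*} [MeasurableSpace α] {μ : Measure α} {f : α → ℝ} {s t : ℝ}

noncomputable def tailIntegral (μ : Measure α) (f : α → ℝ) (s : ℝ) : ℝ :=
  ∫ x, max (|f x| - s) 0 ∂μ

lemma MeasureTheory.Integrable.max_abs_sub_zero (hf : Integrable f μ) (hs : 0 ≤ s) :
    Integrable (fun x => max (|f x| - s) 0) μ :=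
  hf.abs.mono ((hf.abs.aemeasurable.sub_const s).max aemeasurable_const).aestronglyMeasurable
    (ae_of_all _ fun x => by
      simp only [Real.norm_eq_abs, abs_abs, abs_of_nonneg (le_max_right _ _ : (0 : ℝ) ≤ _)]
      exact max_le (by linarith [abs_nonneg (f x)]) (abs_nonneg _))

lemma tailIntegral_nonneg : 0 ≤ tailIntegral μ f s :=
  integral_nonneg fun _ => le_max_right _ _

lemma tailIntegral_le_integral_abs (hf : Integrable f μ) (hs : 0 ≤ s) :
    tailIntegral μ f s ≤ ∫ x, |f x| ∂μ :=
  integral_mono (hf.max_abs_sub_zero hs) hf.abs fun x =>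
    max_le (by linarith [abs_nonneg (f x)]) (abs_nonneg _)

lemma tailIntegral_anti (hf : Integrable f μ) (hs : 0 ≤ s) (hst : s ≤ t) :
    tailIntegral μ f t ≤ tailIntegral μ f s :=
  integral_mono (hf.max_abs_sub_zero (hs.trans hst)) (hf.max_abs_sub_zero hs) fun _ =>
    max_le_max (by linarith) le_rfl

lemma setIntegral_min_abs_le {Ω E : Set α} (hf : IntegrableOn f Ω μ) (hEΩ : E ⊆ Ω)
    (hE : μ E ≠ ⊤) (hs : 0 ≤ s) (hst : s ≤ t) :
    ∫ x in E, min |f x| t ∂μ ≤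
      s * μ.real E + (tailIntegral (μ.restrict Ω) f s - tailIntegral (μ.restrict Ω) f t) := by
  have hgap : IntegrableOn (fun x => max (|f x| - s) 0 - max (|f x| - t) 0) Ω μ :=
    (hf.max_abs_sub_zero hs).sub (hf.max_abs_sub_zero (hs.trans hst))
  have hgap_nonneg : ∀ x, 0 ≤ max (|f x| - s) 0 - max (|f x| - t) 0 := fun x =>
    sub_nonneg.2 (max_le_max (by linarith) le_rfl)
  have hconst : IntegrableOn (fun _ => s) E μ := integrableOn_const hE
  calc ∫ x in E, min |f x| t ∂μ
      ≤ ∫ x in E, (s + (max (|f x| - s) 0 - max (|f x| - t) 0)) ∂μ :=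
        integral_mono_of_nonneg (ae_of_all _ fun x => le_min (abs_nonneg _) (hs.trans hst))
          (hconst.add (hgap.mono_set hEΩ)) (ae_of_all _ fun x => min_le_add_sub_of_le hst)
    _ = s * μ.real E + ∫ x in E, (max (|f x| - s) 0 - max (|f x| - t) 0) ∂μ := by
        rw [integral_add hconst (hgap.mono_set hEΩ), setIntegral_const, smul_eq_mul, mul_comm]
    _ ≤ s * μ.real E + ∫ x in Ω, (max (|f x| - s) 0 - max (|f x| - t) 0) ∂μ :=
        add_le_add_right (setIntegral_mono_set hgap (ae_of_all _ hgap_nonneg) hEΩ.eventuallyLE) _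
    _ = _ := by
        rw [tailIntegral, tailIntegral, ← integral_sub (hf.max_abs_sub_zero hs)
          (hf.max_abs_sub_zero (hs.trans hst))]

end Tail

lemma exists_strictMono_tendsto_diag {X : Type*} [PseudoMetricSpace X] {u : ℕ → ℕ → X}
    {b : ℕ → X} {L : X} (hu : ∀ n, Tendsto (fun k => u k n) atTop (𝓝 (b n)))
    (hb : Tendsto b atTop (𝓝 L)) :
    ∃ ψ : ℕ → ℕ, StrictMono ψ ∧ Tendsto (fun j => u (ψ j) j) atTop (𝓝 L) := by
  obtain ⟨ψ, hψ, hclose⟩ := extraction_forall_of_eventually fun n =>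
    (Metric.tendsto_nhds.1 (hu n)) (1 / (n + 1)) Nat.one_div_pos_of_nat
  refine ⟨ψ, hψ, hb.congr_dist ?_⟩
  refine squeeze_zero (fun _ => dist_nonneg) (fun j => ?_) tendsto_one_div_add_atTop_nhds_zero_nat
  exact (dist_comm _ _).trans_le (hclose j).le

lemma exists_strictMono_eventually_sub_diag_le {β : ℕ → ℕ → ℝ} {a b : ℝ}
    (hβ : ∀ k n, β k n ∈ Set.Icc a b) (hanti : ∀ k, Antitone (β k)) :
    ∃ φ : ℕ → ℕ, StrictMono φ ∧ ∀ ε > 0, ∃ n, ∀ᶠ j in atTop, β (φ j) n - β (φ j) j ≤ ε := by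
  obtain ⟨c, hc_mem, φ, hφ, hφc⟩ :=
    (isCompact_univ_pi fun _ : ℕ => isCompact_Icc).tendsto_subseq (x := β) fun k n _ => hβ k n
  have hc : ∀ n, Tendsto (fun j => β (φ j) n) atTop (𝓝 (c n)) := tendsto_pi_nhds.1 hφc
  have hc_anti : Antitone c := fun p q hpq =>
    le_of_tendsto_of_tendsto' (hc q) (hc p) fun j => hanti (φ j) hpq
  have hc_bdd : BddBelow (Set.range c) := ⟨a, by rintro _ ⟨n, rfl⟩; exact (hc_mem n trivial).1⟩
  have hcL := tendsto_atTop_ciInf hc_anti hc_bdd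
  obtain ⟨ψ, hψ, hdiag⟩ := exists_strictMono_tendsto_diag hc hcL
  refine ⟨φ ∘ ψ, hφ.comp hψ, fun ε hε => ?_⟩
  obtain ⟨n, hn⟩ := (hcL.eventually (gt_mem_nhds (lt_add_of_pos_right _ hε))).exists
  have hgap := ((hc n).comp hψ.tendsto_atTop).sub hdiag
  exact ⟨n, hgap.eventually_le_const (u := ε) (by linarith)⟩

lemma exists_pos_forall_setIntegral_min_abs_le {α : Type*} [MeasurableSpace α]
    {μ : Measure α} {Ω : Set α} {f : ℕ → α → ℝ} (hf : ∀ j, IntegrableOn (f j) Ω μ)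
    (hgap : ∀ ε > 0, ∃ n : ℕ, ∀ᶠ j : ℕ in atTop,
      tailIntegral (μ.restrict Ω) (f j) n - tailIntegral (μ.restrict Ω) (f j) j ≤ ε)
    {ε : ℝ} (hε : 0 < ε) :
    ∃ δ > 0, ∀ E ⊆ Ω, μ E ≤ ENNReal.ofReal δ →
      ∀ j : ℕ, ∫ x in E, min |f j x| j ∂μ ≤ ε := by
  obtain ⟨n, hn⟩ := hgap (ε / 2) (half_pos hε)
  obtain ⟨J, hJ⟩ := eventually_atTop.1 (hn.and (eventually_ge_atTop n))
  obtain ⟨M, hnM, hJM⟩ : ∃ M : ℝ, (n : ℝ) ≤ M ∧ (J : ℝ) ≤ M :=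
    ⟨max n J, le_max_left _ _, le_max_right _ _⟩
  have hM : 0 ≤ M := n.cast_nonneg.trans hnM
  have hbound : ∀ j : ℕ, ∀ E ⊆ Ω, μ E ≠ ⊤ →
      ∫ x in E, min |f j x| j ∂μ ≤ M * μ.real E + ε / 2 := by
    intro j E hEΩ hE
    rcases lt_or_ge j J with hj | hj
    · have := setIntegral_min_abs_le (hf j) hEΩ hE j.cast_nonneg le_rfl
      have : (j : ℝ) * μ.real E ≤ M * μ.real E := by
        gcongr; exact (Nat.cast_le.2 hj.le).trans hJM
      linarith
    · obtain ⟨hj_gap, hnj⟩ := hJ j hj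
      have := setIntegral_min_abs_le (hf j) hEΩ hE n.cast_nonneg (Nat.cast_le.2 hnj)
      have : (n : ℝ) * μ.real E ≤ M * μ.real E := by gcongr
      linarith
  refine ⟨ε / (2 * (M + 1)), by positivity, fun E hEΩ hEδ j => ?_⟩
  have hE : μ.real E ≤ ε / (2 * (M + 1)) := ENNReal.toReal_le_of_le_ofReal (by positivity) hEδ
  calc ∫ x in E, min |f j x| j ∂μ
      ≤ M * μ.real E + ε / 2 := hbound j E hEΩ (hEδ.trans_lt ENNReal.ofReal_lt_top).ne
    _ ≤ M * (ε / (2 * (M + 1))) + ε / 2 := by gcongr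
    _ ≤ ε := by
        rw [mul_div_assoc', div_add_div _ _ (by positivity) two_ne_zero,
          div_le_iff₀ (by positivity)]
        nlinarith

theorem chacon_biting_lemma_general
    {m : ℕ} (Ω : Set (EuclideanSpace ℝ (Fin m)))
    (g : ℕ → EuclideanSpace ℝ (Fin m) → ℝ)
    (hint : ∀ k, IntegrableOn (g k) Ω volume)
    (hbd : ∃ C : ℝ, ∀ k, ∫ x in Ω, |g k x| ≤ C) :
    ∃ (k : ℕ → ℕ) (t : ℕ → ℝ), StrictMono k ∧ (∀ j, 0 ≤ t j) ∧
      Tendsto t atTop atTop ∧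
      ∀ ε : ℝ, 0 < ε → ∃ δ : ℝ, 0 < δ ∧
        ∀ E : Set (EuclideanSpace ℝ (Fin m)), E ⊆ Ω → MeasurableSet E →
          volume E ≤ ENNReal.ofReal δ →
          ∀ j, ∫ x in E, |max (-(t j)) (min (g (k j) x) (t j))| ≤ ε := by
  obtain ⟨C, hC⟩ := hbd
  obtain ⟨k, hk, hgap⟩ := exists_strictMono_eventually_sub_diag_le
    (β := fun k n => tailIntegral (volume.restrict Ω) (g k) n)
    (fun k n => ⟨tailIntegral_nonneg,
      (tailIntegral_le_integral_abs (hint k) n.cast_nonneg).trans (hC k)⟩)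
    (fun k p q hpq => tailIntegral_anti (hint k) p.cast_nonneg (Nat.cast_le.2 hpq))
  refine ⟨k, fun j => j, hk, fun j => j.cast_nonneg, tendsto_natCast_atTop_atTop, fun ε hε => ?_⟩
  obtain ⟨δ, hδ, hsmall⟩ :=
    exists_pos_forall_setIntegral_min_abs_le (fun j => hint (k j)) hgap hε
  refine ⟨δ, hδ, fun E hEΩ _ hEδ j => ?_⟩
  simp_rw [abs_max_neg_min _ j.cast_nonneg]
  exact hsmall E hEΩ hEδ j

/-- **Chacon's biting lemma.** Let `Ω ⊆ ℝ^m` be a measurable set of finite Lebesgue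
measure and `(g_k)` a sequence in `L¹(Ω)` with uniformly bounded `L¹` norms. Then there
exist a subsequence `(g_{k_j})` and levels `t_j → +∞`, `t_j ≥ 0`, such that the
truncations `max (−t_j) (min (g_{k_j}) t_j)` form an equi-integrable sequence on `Ω`. -/
theorem chacon_biting_lemma
    {m : ℕ} (Ω : Set (EuclideanSpace ℝ (Fin m))) (hΩmeas : MeasurableSet Ω)
    (hΩfin : volume Ω < ⊤)
    (g : ℕ → EuclideanSpace ℝ (Fin m) → ℝ)
    (hint : ∀ k, IntegrableOn (g k) Ω volume)
    (hbd : ∃ C : ℝ, ∀ k, ∫ x in Ω, |g k x| ≤ C) :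
    ∃ (k : ℕ → ℕ) (t : ℕ → ℝ), StrictMono k ∧ (∀ j, 0 ≤ t j) ∧
      Tendsto t atTop atTop ∧
      ∀ ε : ℝ, 0 < ε → ∃ δ : ℝ, 0 < δ ∧
        ∀ E : Set (EuclideanSpace ℝ (Fin m)), E ⊆ Ω → MeasurableSet E →
          volume E ≤ ENNReal.ofReal δ →
          ∀ j, ∫ x in E, |max (-(t j)) (min (g (k j) x) (t j))| ≤ ε :=
  chacon_biting_lemma_general Ω g hint hbd
end

section
/- For all integers m, n ≥ 1, the convex hull of the image of the minors map equals the whole space: co( { M(A) : A ∈ ℝ^{n×m} } ) = ℝ^{τ(m,n)}. -/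
/-- Index type for the `k × k` minors (1 ≤ k ≤ min m n) of an `n × m` matrix: a size
`k ∈ {1, …, min m n}` together with a set of `k` rows and a set of `k` columns. Its
cardinality is `τ(m,n) = Σ_{k=1}^{min m n} C(m,k)·C(n,k)`, so functions from it to `ℝ`
form the space `ℝ^{τ(m,n)}`. -/
abbrev MinorIndex (m n : ℕ) : Type :=
  Σ k : Fin (min m n),
    {s : Finset (Fin n) // s.card = (k : ℕ) + 1} × {t : Finset (Fin m) // t.card = (k : ℕ) + 1}

/-- The minors map `M : ℝ^{n×m} → ℝ^{τ(m,n)}`, sending a matrix to the vector of all of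
its `k × k` minors, `1 ≤ k ≤ min m n`. -/
noncomputable def minorsMap {m n : ℕ} (A : Matrix (Fin n) (Fin m) ℝ) :
    MinorIndex m n → ℝ := fun idx =>
  (A.submatrix
      (fun i : Fin ((idx.1 : ℕ) + 1) => (idx.2.1.1.orderIsoOfFin idx.2.1.2 i : Fin n))
      (fun j : Fin ((idx.1 : ℕ) + 1) => (idx.2.2.1.orderIsoOfFin idx.2.2.2 j : Fin m))).det

/-!
A nonempty convex set in a finite-dimensional space is the whole space as soon as no nonzero
linear functional is bounded above on it: Hahn–Banach makes it dense, and a dense convex set has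
nonempty interior. So let `f` be a linear functional bounded above on the image of `M`. Every
minor is an affine function of any single row of `A`, hence so is `f ∘ M`; being bounded above,
it does not depend on that row, and replacing the rows one at a time gives
`f (M A) = f (M 0) = 0`. Finally, `A ↦ u • A` multiplies the `k × k` minors by `u ^ k`, so `f`
kills the `k × k` part of `M A` separately for each `k`; on the partial identity matrix with ones
at the positions pairing the `i`-th element of `s` with the `i`-th element of `t`, the only
nonzero `k × k` minor is the `(s, t)` one, so the `(s, t)` coefficient of `f` vanishes.
-/

open Set Function

theorem Function.apply_eq_apply_of_forall_apply_update_eq {ι β : Type*} {α : ι → Type*}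
    [Fintype ι] [DecidableEq ι] {g : (∀ i, α i) → β}
    (hg : ∀ x i a, g (update x i a) = g x) (x y : ∀ i, α i) : g x = g y := by
  suffices ∀ s : Finset ι, g (s.piecewise x y) = g y by simpa using this Finset.univ
  intro s
  induction s using Finset.induction_on with
  | empty => simp
  | insert i s _ ih => rw [Finset.piecewise_insert, hg, ih]

theorem LinearMap.eq_zero_of_bddAbove_range_add_const {𝕜 E : Type*} [Field 𝕜] [LinearOrder 𝕜]
    [IsStrictOrderedRing 𝕜] [AddCommGroup E] [Module 𝕜 E] (L : E →ₗ[𝕜] 𝕜) (c : 𝕜)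
    (h : BddAbove (Set.range fun x => L x + c)) : L = 0 := by
  obtain ⟨u, hu⟩ := h
  ext x
  by_contra hx
  have := hu ⟨((u - c + 1) / L x) • x, rfl⟩
  simp only [map_smul, smul_eq_mul, div_mul_cancel₀ _ hx] at this
  linarith

theorem Finset.sum_filter_eq_zero_of_forall_sum_mul_pow_eq_zero {ι R : Type*} [CommRing R]
    [IsDomain R] [Infinite R] (s : Finset ι) (d : ι → ℕ) (a : ι → R)
    (h : ∀ t : R, ∑ i ∈ s, a i * t ^ d i = 0) (k : ℕ) : ∑ i ∈ s with d i = k, a i = 0 := by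
  open Polynomial in
  have hP : ∑ i ∈ s, C (a i) * X ^ d i = 0 :=
    Polynomial.funext fun t => by simpa [eval_finsetSum] using h t
  simpa [finsetSum_coeff, coeff_C_mul_X_pow, Finset.sum_filter, eq_comm] using
    congrArg (coeff · k) hP

section Convex

variable {E : Type*} [NormedAddCommGroup E] [NormedSpace ℝ E] [FiniteDimensional ℝ E]

theorem Convex.eq_univ_of_dense {K : Set E} (hK : Convex ℝ K) (hd : Dense K) : K = univ := by
  have hspan : affineSpan ℝ K = ⊤ := eq_top_iff.2 fun x _ =>
    closure_minimal (subset_affineSpan ℝ K) (affineSpan ℝ K).closed_of_finiteDimensional (hd x)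
  refine eq_univ_of_univ_subset ?_
  calc univ = interior (closure K) := by rw [hd.closure_eq, interior_univ]
    _ = interior K := hK.interior_closure_eq_interior_of_nonempty_interior
        (hK.interior_nonempty_iff_affineSpan_eq_top.2 hspan)
    _ ⊆ K := interior_subset

theorem convexHull_eq_univ_of_forall_bddAbove_image {s : Set E} (hs : s.Nonempty)
    (h : ∀ f : E →ₗ[ℝ] ℝ, BddAbove (f '' s) → f = 0) : convexHull ℝ s = univ := by
  refine (convex_convexHull ℝ s).eq_univ_of_dense fun x => by_contra fun hx => ?_
  obtain ⟨f, u, hfu, hux⟩ :=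
    geometric_hahn_banach_closed_point (convex_convexHull ℝ s).closure isClosed_closure hx
  have hsu : ∀ a ∈ s, f a < u := fun a ha => hfu a (subset_closure (subset_convexHull ℝ s ha))
  have hf : (f : E →ₗ[ℝ] ℝ) = 0 := h f ⟨u, by rintro _ ⟨a, ha, rfl⟩; exact (hsu a ha).le⟩
  obtain ⟨a, ha⟩ := hs
  have hfa := hsu a ha
  simp only [← ContinuousLinearMap.coe_coe, hf, LinearMap.zero_apply] at hfa hux
  linarith

end Convex

namespace Matrix

variable {R ι κ l : Type*} [DecidableEq ι]

theorem submatrix_updateRow_of_injective [DecidableEq l] (A : Matrix ι κ R) {σ : l → ι}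
    (hσ : Injective σ) (τ : l → κ) (i : l) (r : κ → R) :
    (A.updateRow (σ i) r).submatrix σ τ = (A.submatrix σ τ).updateRow i (r ∘ τ) := by
  ext a b
  by_cases h : a = i
  · subst h; simp
  · simp [updateRow_ne h, updateRow_ne (hσ.ne h)]

theorem submatrix_updateRow_of_notMem_range (A : Matrix ι κ R) {σ : l → ι} (τ : l → κ) {p : ι}
    (hp : p ∉ range σ) (r : κ → R) : (A.updateRow p r).submatrix σ τ = A.submatrix σ τ := by
  ext a b
  simp [updateRow_ne fun h => hp ⟨a, h⟩]

theorem exists_det_submatrix_updateRow_eq_add [CommRing R] [Fintype l] [DecidableEq l]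
    (A : Matrix ι κ R) {σ : l → ι} (hσ : Injective σ) (τ : l → κ) (p : ι) :
    ∃ (L : (κ → R) →ₗ[R] R) (c : R), ∀ r, ((A.updateRow p r).submatrix σ τ).det = L r + c := by
  by_cases hp : p ∈ range σ
  · obtain ⟨i, rfl⟩ := hp
    refine ⟨detRowAlternating.toMultilinearMap.toLinearMap (A.submatrix σ τ) i ∘ₗ
      LinearMap.funLeft R R τ, 0, fun r => ?_⟩
    rw [submatrix_updateRow_of_injective A hσ, add_zero]
    rfl
  · exact ⟨0, _, fun r => by rw [submatrix_updateRow_of_notMem_range A τ hp, LinearMap.zero_apply,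
      zero_add]⟩

end Matrix

section Minors

variable {m n : ℕ}

theorem minorsMap_apply (A : Matrix (Fin n) (Fin m) ℝ) (idx : MinorIndex m n) :
    minorsMap A idx =
      (A.submatrix (idx.2.1.1.orderEmbOfFin idx.2.1.2) (idx.2.2.1.orderEmbOfFin idx.2.2.2)).det :=
  rfl

theorem minorsMap_zero : minorsMap (0 : Matrix (Fin n) (Fin m) ℝ) = 0 := by
  funext idx
  simp [minorsMap_apply]

theorem minorsMap_smul (t : ℝ) (A : Matrix (Fin n) (Fin m) ℝ) (idx : MinorIndex m n) :
    minorsMap (t • A) idx = t ^ ((idx.1 : ℕ) + 1) * minorsMap A idx := by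
  rw [minorsMap_apply, minorsMap_apply]
  exact (Matrix.det_smul _ t).trans (by rw [Fintype.card_fin]; rfl)

theorem exists_minorsMap_updateRow_eq_add (A : Matrix (Fin n) (Fin m) ℝ) (p : Fin n) :
    ∃ (L : (Fin m → ℝ) →ₗ[ℝ] MinorIndex m n → ℝ) (c : MinorIndex m n → ℝ),
      ∀ r, minorsMap (A.updateRow p r) = L r + c := by
  choose L c h using fun idx : MinorIndex m n =>
    A.exists_det_submatrix_updateRow_eq_add (idx.2.1.1.orderEmbOfFin idx.2.1.2).injective _ p
  exact ⟨LinearMap.pi L, c, fun r => funext fun idx => h idx r⟩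

theorem apply_minorsMap_eq_zero_of_bddAbove (f : (MinorIndex m n → ℝ) →ₗ[ℝ] ℝ)
    (hf : BddAbove (range fun A => f (minorsMap A))) (A : Matrix (Fin n) (Fin m) ℝ) :
    f (minorsMap A) = 0 := by
  have hrow : ∀ (B : Matrix (Fin n) (Fin m) ℝ) p r,
      f (minorsMap (B.updateRow p r)) = f (minorsMap B) := by
    intro B p r
    obtain ⟨L, c, hLc⟩ := exists_minorsMap_updateRow_eq_add B p
    have hL : f ∘ₗ L = 0 := (f ∘ₗ L).eq_zero_of_bddAbove_range_add_const (f c) <|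
      hf.mono <| by rintro _ ⟨r, rfl⟩; exact ⟨B.updateRow p r, by simp [hLc]⟩
    have hconst : ∀ r, f (minorsMap (B.updateRow p r)) = f c := fun r => by
      simpa [hLc] using LinearMap.congr_fun hL r
    rw [hconst, ← hconst (B p), B.updateRow_eq_self]
  calc f (minorsMap A) = f (minorsMap 0) :=
        Function.apply_eq_apply_of_forall_apply_update_eq (g := fun B => f (minorsMap B)) hrow A 0
    _ = 0 := by rw [minorsMap_zero, map_zero]

theorem exists_minorsMap_eq_ite (k : Fin (min m n)) {s : Finset (Fin n)} (hs : s.card = k + 1)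
    {t : Finset (Fin m)} (ht : t.card = k + 1) :
    ∃ P : Matrix (Fin n) (Fin m) ℝ, ∀ s' hs' t' ht',
      minorsMap P ⟨k, ⟨s', hs'⟩, ⟨t', ht'⟩⟩ = if s' = s ∧ t' = t then 1 else 0 := by
  classical
  set σ := s.orderEmbOfFin hs
  set τ := t.orderEmbOfFin ht
  set P : Matrix (Fin n) (Fin m) ℝ := Matrix.of fun i j => if ∃ a, σ a = i ∧ τ a = j then 1 else 0
  have hP : P.submatrix σ τ = 1 := by
    ext a b
    simp [P, Matrix.one_apply, σ.injective.eq_iff, τ.injective.eq_iff]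
  refine ⟨P, fun s' hs' t' ht' => ?_⟩
  rw [minorsMap_apply]
  split_ifs with h
  · obtain ⟨rfl, rfl⟩ := h
    exact (congrArg Matrix.det hP).trans Matrix.det_one
  · have hsub : ¬ s' ⊆ s ∨ ¬ t' ⊆ t := by
      contrapose! h
      exact ⟨Finset.eq_of_subset_of_card_le h.1 (by rw [hs, hs']),
        Finset.eq_of_subset_of_card_le h.2 (by rw [ht, ht'])⟩
    rcases hsub with hsub | hsub <;> obtain ⟨x, hx', hx⟩ := Finset.not_subset.1 hsub
    · obtain ⟨a, rfl⟩ : x ∈ range (s'.orderEmbOfFin hs') := by simpa using hx'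
      refine Matrix.det_eq_zero_of_row_eq_zero a fun b => if_neg ?_
      rintro ⟨c, hc, -⟩
      exact hx (hc ▸ s.orderEmbOfFin_mem hs c)
    · obtain ⟨b, rfl⟩ : x ∈ range (t'.orderEmbOfFin ht') := by simpa using hx'
      refine Matrix.det_eq_zero_of_column_eq_zero b fun a => if_neg ?_
      rintro ⟨c, -, hc⟩
      exact hx (hc ▸ t.orderEmbOfFin_mem ht c)

theorem eq_zero_of_forall_apply_minorsMap_eq_zero (f : (MinorIndex m n → ℝ) →ₗ[ℝ] ℝ)
    (hf : ∀ A, f (minorsMap A) = 0) : f = 0 := by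
  classical
  set c : MinorIndex m n → ℝ := fun idx => f fun j => if idx = j then 1 else 0
  have hc : ∀ x, f x = ∑ idx, x idx * c idx := by
    simpa using f.pi_apply_eq_sum_univ
  suffices ∀ idx, c idx = 0 from LinearMap.ext fun x => by simp [hc, this]
  rintro ⟨k, ⟨s, hs⟩, ⟨t, ht⟩⟩
  obtain ⟨P, hP⟩ := exists_minorsMap_eq_ite k hs ht
  have hsum := Finset.univ.sum_filter_eq_zero_of_forall_sum_mul_pow_eq_zero
    (fun idx : MinorIndex m n => (idx.1 : ℕ) + 1) (fun idx => minorsMap P idx * c idx)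
    (fun u => by
      rw [← hf (u • P), hc]
      exact Finset.sum_congr rfl fun idx _ => by rw [minorsMap_smul]; ring) (k + 1)
  rwa [Finset.sum_eq_single ⟨k, ⟨s, hs⟩, ⟨t, ht⟩⟩, hP, if_pos ⟨rfl, rfl⟩, one_mul] at hsum
  · rintro ⟨k', ⟨s', hs'⟩, ⟨t', ht'⟩⟩ hk hne
    obtain rfl : k' = k := Fin.ext (by simpa using hk)
    rw [hP, if_neg, zero_mul]
    rintro ⟨rfl, rfl⟩
    exact hne rfl
  · simp

end Minors

theorem convexHull_range_minorsMap_eq_univ_general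
    (m n : ℕ) :
    convexHull ℝ (Set.range (minorsMap (m := m) (n := n))) = Set.univ := by
  refine convexHull_eq_univ_of_forall_bddAbove_image (Set.range_nonempty _) fun f hf => ?_
  rw [← Set.range_comp] at hf
  exact eq_zero_of_forall_apply_minorsMap_eq_zero f (apply_minorsMap_eq_zero_of_bddAbove f hf)

/-- The convex hull of the image of the minors map is the whole space `ℝ^{τ(m,n)}`. -/
theorem convexHull_range_minorsMap_eq_univ
    (m n : ℕ) (hm : 1 ≤ m) (hn : 1 ≤ n) :
    convexHull ℝ (Set.range (minorsMap (m := m) (n := n))) = Set.univ :=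
  convexHull_range_minorsMap_eq_univ_general m n
end

section
/- Existence of a symmetric subgradient: Let d ≥ 1, Q ≥ 1, let G be a subgroup of the symmetric group on {1, …, Q}, and let g : (ℝ^d)^Q → ℝ be a convex function that is G-invariant, i.e. g(X_{σ(1)}, …, X_{σ(Q)}) = g(X_1, …, X_Q) for every σ ∈ G and every X ∈ (ℝ^d)^Q. If X̄ ∈ (ℝ^d)^Q is a fixed point of the G-action, i.e. X̄_{σ(i)} = X̄_i for every σ ∈ G and every i, then there exists ζ ∈ (ℝ^d)^Q with ζ_{σ(i)} = ζ_i for every σ ∈ G and every i, such that g(Y) ≥ g(X̄) + Σ_{i=1}^Q ⟨ζ_i, Y_i − X̄_i⟩ for every Y ∈ (ℝ^d)^Q. -/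
/-!
A subgradient of `g` at `Xbar` comes from separating the point `(Xbar, g Xbar)` from the strict
epigraph of `g`, which is convex, and open because a convex function on a finite-dimensional
space is continuous. As `g` is `G`-invariant and `Xbar` is `G`-fixed, the subgradients at `Xbar`
form a convex set stable under `ζ ↦ ζ ∘ σ` for `σ ∈ G`, so averaging the `G`-orbit of one of
them gives a `G`-fixed subgradient.
-/

open Set

section Subgradient

variable {E : Type*} [NormedAddCommGroup E] [NormedSpace ℝ E] {g : E → ℝ}

theorem ConvexOn.exists_strongDual_le_sub (hconv : ConvexOn ℝ univ g) (hcont : Continuous g)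
    (x : E) : ∃ ℓ : StrongDual ℝ E, ∀ y, ℓ (y - x) ≤ g y - g x := by
  have hopen : IsOpen {p : E × ℝ | p.1 ∈ univ ∧ g p.1 < p.2} := by
    simpa using isOpen_lt (hcont.comp continuous_fst) continuous_snd
  obtain ⟨f, hf⟩ := geometric_hahn_banach_open_point hconv.convex_strict_epigraph hopen
    (x := (x, g x)) (by simp)
  set φ : StrongDual ℝ E := f.comp (ContinuousLinearMap.inl ℝ E ℝ)
  set c := f (0, 1)
  have hf_apply (y : E) (t : ℝ) : f (y, t) = φ y + t * c := by
    have : ((y, t) : E × ℝ) = ContinuousLinearMap.inl ℝ E ℝ y + t • ((0 : E), (1 : ℝ)) := by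
      simp
    rw [this, map_add, map_smul, smul_eq_mul]
    rfl
  have hsep (y : E) (t : ℝ) (ht : g y < t) : φ y - φ x < -c * (t - g x) := by
    have := hf (y, t) ⟨mem_univ _, ht⟩
    rw [hf_apply, hf_apply] at this
    linarith
  have hc : 0 < -c := by
    have := hsep x (g x + 1) (by linarith)
    linarith
  refine ⟨(-c)⁻¹ • φ, fun y => ?_⟩
  rw [FunLike.coe_smul, Pi.smul_apply, smul_eq_mul, map_sub, le_sub_iff_add_le']
  -- let `t` decrease to `g y` in `hsep`
  refine le_of_forall_gt_imp_ge_of_dense fun t ht => ?_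
  have := (inv_mul_lt_iff₀ hc).2 (hsep y t ht)
  linarith

end Subgradient

section Symmetric

variable {ι F : Type*} [Fintype ι] [NormedAddCommGroup F] [InnerProductSpace ℝ F]

def IsSubgradientAt (g : (ι → F) → ℝ) (X ζ : ι → F) : Prop :=
  ∀ Y, g X + ∑ i, inner ℝ (ζ i) (Y i - X i) ≤ g Y

theorem exists_isSubgradientAt [CompleteSpace F] {g : (ι → F) → ℝ}
    (hconv : ConvexOn ℝ univ g) (hcont : Continuous g) (X : ι → F) :
    ∃ ζ, IsSubgradientAt g X ζ := by
  classical
  obtain ⟨ℓ, hℓ⟩ := hconv.exists_strongDual_le_sub hcont X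
  let ζ i := (InnerProductSpace.toDual ℝ F).symm (ℓ.comp (.single ℝ (fun _ => F) i))
  have hζ (v : ι → F) : ∑ i, inner ℝ (ζ i) (v i) = ℓ v := by
    simp only [ζ, InnerProductSpace.toDual_symm_apply, ContinuousLinearMap.comp_apply,
      ContinuousLinearMap.single_apply, ← map_sum, Finset.univ_sum_single]
  refine ⟨ζ, fun Y => ?_⟩
  have := hζ (Y - X)
  simp only [Pi.sub_apply] at this
  linarith [hℓ Y]

theorem convex_setOf_isSubgradientAt (g : (ι → F) → ℝ) (X : ι → F) :
    Convex ℝ {ζ | IsSubgradientAt g X ζ} := by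
  intro ζ₁ h₁ ζ₂ h₂ a b ha hb hab Y
  simp only [Pi.add_apply, Pi.smul_apply, inner_add_left, real_inner_smul_left,
    Finset.sum_add_distrib, ← Finset.mul_sum]
  linear_combination mul_le_mul_of_nonneg_left (h₁ Y) ha +
    mul_le_mul_of_nonneg_left (h₂ Y) hb + (g Y - g X) * hab

theorem IsSubgradientAt.comp_perm {g : (ι → F) → ℝ} {X ζ : ι → F} (hζ : IsSubgradientAt g X ζ)
    {σ : Equiv.Perm ι} (hg : ∀ Y, g (Y ∘ σ) = g Y) (hX : ∀ i, X (σ i) = X i) :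
    IsSubgradientAt g X (ζ ∘ σ) := by
  intro Y
  have hY : (Y ∘ σ.symm) ∘ σ = Y := by ext; simp
  calc g X + ∑ i, inner ℝ (ζ (σ i)) (Y i - X i)
      = g X + ∑ i, inner ℝ (ζ (σ i)) ((Y ∘ σ.symm) (σ i) - X (σ i)) := by
        simp only [Function.comp_apply, Equiv.symm_apply_apply, hX]
    _ = g X + ∑ j, inner ℝ (ζ j) ((Y ∘ σ.symm) j - X j) := by
        rw [Equiv.sum_comp σ (fun j => inner ℝ (ζ j) ((Y ∘ σ.symm) j - X j))]
    _ ≤ g (Y ∘ σ.symm) := hζ _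
    _ = g Y := by rw [← hg, hY]

theorem Convex.exists_perm_invariant_mem {V : Type*} [AddCommGroup V] [Module ℝ V]
    {s : Set (ι → V)} (hs : Convex ℝ s) {G : Subgroup (Equiv.Perm ι)}
    (hGs : ∀ σ ∈ G, ∀ ζ ∈ s, ζ ∘ σ ∈ s) {ζ : ι → V} (hζ : ζ ∈ s) :
    ∃ ζ' ∈ s, ∀ σ ∈ G, ∀ i, ζ' (σ i) = ζ' i := by
  classical
  have : Fintype G := Fintype.ofFinite G
  refine ⟨∑ σ : G, (Fintype.card G : ℝ)⁻¹ • (ζ ∘ σ), ?_, fun τ hτ i => ?_⟩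
  · refine hs.sum_mem (fun _ _ => by positivity) ?_ fun σ _ => hGs σ σ.2 ζ hζ
    simp
  · simp only [Finset.sum_apply, Pi.smul_apply, Function.comp_apply]
    exact Fintype.sum_equiv (Equiv.mulRight ⟨τ, hτ⟩) _ _ fun σ => rfl

end Symmetric

theorem exists_symmetric_subgradient_general
    {d Q : ℕ}
    (G : Subgroup (Equiv.Perm (Fin Q)))
    (g : (Fin Q → EuclideanSpace ℝ (Fin d)) → ℝ)
    (hconv : ConvexOn ℝ Set.univ g)
    (hinv : ∀ σ ∈ G, ∀ X : Fin Q → EuclideanSpace ℝ (Fin d),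
      g (fun i => X (σ i)) = g X)
    (Xbar : Fin Q → EuclideanSpace ℝ (Fin d))
    (hfix : ∀ σ ∈ G, ∀ i, Xbar (σ i) = Xbar i) :
    ∃ ζ : Fin Q → EuclideanSpace ℝ (Fin d),
      (∀ σ ∈ G, ∀ i, ζ (σ i) = ζ i) ∧
      ∀ Y : Fin Q → EuclideanSpace ℝ (Fin d),
        g Y ≥ g Xbar + ∑ i, (inner ℝ (ζ i) (Y i - Xbar i) : ℝ) := by
  obtain ⟨ζ, hζ⟩ := exists_isSubgradientAt hconv hconv.locallyLipschitz.continuous Xbar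
  obtain ⟨ζ', hζ', hζ'_fix⟩ := (convex_setOf_isSubgradientAt g Xbar).exists_perm_invariant_mem
    (fun σ hσ _ h => h.comp_perm (hinv σ hσ) (hfix σ hσ)) hζ
  exact ⟨ζ', hζ'_fix, hζ'⟩

/-- **Existence of a symmetric subgradient.** Let `G` be a subgroup of the symmetric
group on `{1, …, Q}` and let `g : (ℝ^d)^Q → ℝ` be convex and `G`-invariant. If `Xbar` is a
fixed point of the `G`-action, then `g` admits at `Xbar` a subgradient `ζ` which is itself
fixed by the `G`-action. -/
theorem exists_symmetric_subgradient
    {d Q : ℕ} (hd : 1 ≤ d) (hQ : 1 ≤ Q)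
    (G : Subgroup (Equiv.Perm (Fin Q)))
    (g : (Fin Q → EuclideanSpace ℝ (Fin d)) → ℝ)
    (hconv : ConvexOn ℝ Set.univ g)
    (hinv : ∀ σ ∈ G, ∀ X : Fin Q → EuclideanSpace ℝ (Fin d),
      g (fun i => X (σ i)) = g X)
    (Xbar : Fin Q → EuclideanSpace ℝ (Fin d))
    (hfix : ∀ σ ∈ G, ∀ i, Xbar (σ i) = Xbar i) :
    ∃ ζ : Fin Q → EuclideanSpace ℝ (Fin d),
      (∀ σ ∈ G, ∀ i, ζ (σ i) = ζ i) ∧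
      ∀ Y : Fin Q → EuclideanSpace ℝ (Fin d),
        g Y ≥ g Xbar + ∑ i, (inner ℝ (ζ i) (Y i - Xbar i) : ℝ) :=
  exists_symmetric_subgradient_general G g hconv hinv Xbar hfix
end
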